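/- Let d ≥ 1 and let V_1, …, V_n (n ≥ 2) be nonzero proper linear subspaces of ℝ^d with positive weights ω_1, …, ω_n, and set m := Σ_{j=1}^n ω_j·dim(V_j). Assume that m²/d − Σ_{j=1}^n ω_j²·dim(V_j) ≥ 0. Then for every integer p ≥ 1, FFP({(V_j, ω_j)}_{j=1}^n, p) ≥ (m²/d − Σ_{j=1}^n ω_j²·dim(V_j))^p / (Σ_{i≠j} ω_i ω_j)^{p−1} + Σ_{j=1}^n ω_j²·dim(V_j)^p. -/

import Mathlib

open scoped BigOperators

/-- The orthogonal projection onto a subspace `V` of `ℝ^d`, as a linear endomorphism. -/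
noncomputable def proj {d : ℕ} (V : Submodule ℝ (EuclideanSpace ℝ (Fin d))) :
    EuclideanSpace ℝ (Fin d) →ₗ[ℝ] EuclideanSpace ℝ (Fin d) :=
  V.subtype ∘ₗ (Submodule.orthogonalProjection V).toLinearMap

/-- `⟨P_V, P_W⟩ = trace (P_V P_W)`. -/
noncomputable def trPP {d : ℕ} (V W : Submodule ℝ (EuclideanSpace ℝ (Fin d))) : ℝ :=
  LinearMap.trace ℝ _ (proj V ∘ₗ proj W)

/-- The `p`-fusion frame potential. -/
noncomputable def FFP {d n : ℕ} (V : Fin n → Submodule ℝ (EuclideanSpace ℝ (Fin d)))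
    (ω : Fin n → ℝ) (p : ℕ) : ℝ :=
  ∑ i, ∑ j, ω i * ω j * trPP (V i) (V j) ^ p

/-!
With `P_j` the orthogonal projection onto `V_j`, the frame operator `S = ∑ ω_j P_j` has
`tr S = m` and `tr S² = FFP(·, 1)`, so Cauchy–Schwarz `(tr S)² ≤ d · tr S²` bounds the
off-diagonal part `∑_{i ≠ j} ω_i ω_j ⟨P_i, P_j⟩` of `FFP(·, 1)` from below by
`m²/d − ∑ ω_j² dim V_j`. Since `P_j² = P_j`, the diagonal of `FFP(·, p)` is `∑ ω_j² (dim V_j)^p`,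
and its off-diagonal part is bounded by Jensen's inequality for `t ↦ t^p` with weights `ω_i ω_j`,
which applies because `⟨P_i, P_j⟩ ≥ 0`.
-/

open Module LinearMap Finset

section
variable {E : Type*} [NormedAddCommGroup E] [InnerProductSpace ℝ E] [FiniteDimensional ℝ E]

lemma Submodule.trace_starProjection (V : Submodule ℝ E) :
    trace ℝ E V.starProjection = finrank ℝ V :=
  IsProj.trace ⟨V.starProjection_apply_mem, fun _ hx => V.starProjection_eq_self_iff.mpr hx⟩

lemma Submodule.starProjection_comp_starProjection (V : Submodule ℝ E) :
    V.starProjection.toLinearMap ∘ₗ V.starProjection.toLinearMap = V.starProjection :=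
  LinearMap.ext fun x => V.starProjection_eq_self_iff.mpr (V.starProjection_apply_mem x)

lemma Submodule.trace_starProjection_comp_nonneg (V W : Submodule ℝ E) :
    0 ≤ trace ℝ E (V.starProjection.toLinearMap ∘ₗ W.starProjection) := by
  set P : E →ₗ[ℝ] E := V.starProjection.toLinearMap
  -- `P_V P_W P_V` is positive and has the same trace as `P_V P_W = P_V P_V P_W`
  have hpos := (ContinuousLinearMap.IsPositive.of_isStarProjection
    (isStarProjection_starProjection (U := W))).conj_starProjection V
  calc (0 : ℝ) ≤ trace ℝ E (P ∘ₗ W.starProjection ∘ₗ P) := hpos.toLinearMap.trace_nonneg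
    _ = trace ℝ E (P ∘ₗ W.starProjection) := by
      rw [← comp_assoc, trace_comp_comm', ← comp_assoc, V.starProjection_comp_starProjection]

lemma LinearMap.IsSymmetric.sq_trace_le {T : E →ₗ[ℝ] E} (hT : T.IsSymmetric) :
    trace ℝ E T ^ 2 ≤ finrank ℝ E * trace ℝ E (T ∘ₗ T) := by
  set b := stdOrthonormalBasis ℝ E
  have hdiag (i) : inner ℝ (b i) (T (b i)) ^ 2 ≤ inner ℝ (b i) ((T ∘ₗ T) (b i)) := by
    rw [comp_apply, ← hT (b i) (T (b i)), real_inner_self_eq_norm_sq, ← sq_abs]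
    have := abs_real_inner_le_norm (b i) (T (b i))
    rw [b.norm_eq_one, one_mul] at this
    gcongr
  rw [trace_eq_sum_inner T b, trace_eq_sum_inner _ b]
  calc _ ≤ (univ.card : ℝ) * ∑ i, inner ℝ (b i) (T (b i)) ^ 2 :=
        sq_sum_le_card_mul_sum_sq
    _ ≤ _ := by
      simp only [card_univ, Fintype.card_fin]
      gcongr with i
      exact hdiag i

-- Cauchy–Schwarz for the frame operator `∑ ω_j P_{V_j}`, whose trace is `∑ ω_j dim V_j`.
lemma sq_sum_mul_finrank_le {ι : Type*} [Fintype ι] (V : ι → Submodule ℝ E) (ω : ι → ℝ) :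
    (∑ j, ω j * finrank ℝ (V j)) ^ 2 ≤ finrank ℝ E * ∑ i, ∑ j, ω i * ω j *
      trace ℝ E ((V i).starProjection.toLinearMap ∘ₗ (V j).starProjection) := by
  set S : E →ₗ[ℝ] E := ∑ j, ω j • (V j).starProjection.toLinearMap
  have hS : S.IsSymmetric := isSymmetric_sum _ fun j _ =>
    ((V j).starProjection_isSymmetric).smul (conj_trivial _)
  have htr : trace ℝ E S = ∑ j, ω j * finrank ℝ (V j) := by
    simp [S, map_sum, Submodule.trace_starProjection]
  have htr2 : trace ℝ E (S ∘ₗ S) = ∑ i, ∑ j, ω i * ω j *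
      trace ℝ E ((V i).starProjection.toLinearMap ∘ₗ (V j).starProjection) := by
    rw [← Module.End.mul_eq_comp, sum_mul_sum, map_sum]
    simp only [map_sum, smul_mul_smul_comm, map_smul, Module.End.mul_eq_comp, smul_eq_mul]
  simpa [htr, htr2] using hS.sq_trace_le
end

lemma sum_sum_eq_sum_offDiag_add_sum_diag {ι α : Type*} [Fintype ι] [DecidableEq ι]
    [AddCommMonoid α] (f : ι → ι → α) :
    ∑ i, ∑ j, f i j = ∑ ij ∈ univ.offDiag, f ij.1 ij.2 + ∑ j, f j j := by
  rw [← sum_product', ← diag_union_offDiag, sum_union (disjoint_diag_offDiag _), sum_diag,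
    add_comm]

lemma pow_sum_mul_div_le_sum_mul_pow {ι : Type*} (s : Finset ι) {w x : ι → ℝ}
    (hw : ∀ i ∈ s, 0 ≤ w i) (hx : ∀ i ∈ s, 0 ≤ x i) (n : ℕ) :
    (∑ i ∈ s, w i * x i) ^ (n + 1) / (∑ i ∈ s, w i) ^ n ≤ ∑ i ∈ s, w i * x i ^ (n + 1) := by
  rcases (sum_nonneg hw).eq_or_lt with hW | hW
  · have hw0 : ∀ i ∈ s, w i = 0 := (sum_eq_zero_iff_of_nonneg hw).mp hW.symm
    have hwx (y : ι → ℝ) : ∑ i ∈ s, w i * y i = 0 := sum_eq_zero fun i hi => by simp [hw0 i hi]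
    rw [hwx, hwx, ← hW]
    simp
  have hmean := Real.pow_arith_mean_le_arith_mean_pow s (fun i => w i / ∑ j ∈ s, w j) x
    (fun i hi => div_nonneg (hw i hi) hW.le) (by rw [← sum_div, div_self hW.ne']) hx (n + 1)
  simp only [div_mul_eq_mul_div, ← sum_div, div_pow] at hmean
  rw [div_le_div_iff₀ (by positivity) hW, pow_succ (∑ j ∈ s, w j) n, ← mul_assoc] at hmean
  rw [div_le_iff₀ (by positivity)]
  exact le_of_mul_le_mul_right hmean hW

section FramePotential
variable {d n : ℕ}

lemma trPP_eq_trace (V W : Submodule ℝ (EuclideanSpace ℝ (Fin d))) :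
    trPP V W = trace ℝ _ (V.starProjection.toLinearMap ∘ₗ W.starProjection) := rfl

lemma trPP_self (V : Submodule ℝ (EuclideanSpace ℝ (Fin d))) : trPP V V = finrank ℝ V := by
  rw [trPP_eq_trace, V.starProjection_comp_starProjection, V.trace_starProjection]

lemma trPP_nonneg (V W : Submodule ℝ (EuclideanSpace ℝ (Fin d))) : 0 ≤ trPP V W :=
  V.trace_starProjection_comp_nonneg W

lemma FFP_eq_sum_offDiag_add (V : Fin n → Submodule ℝ (EuclideanSpace ℝ (Fin d)))
    (ω : Fin n → ℝ) (p : ℕ) :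
    FFP V ω p = ∑ ij ∈ univ.offDiag, ω ij.1 * ω ij.2 * trPP (V ij.1) (V ij.2) ^ p +
      ∑ j, ω j ^ 2 * (finrank ℝ (V j) : ℝ) ^ p := by
  simp only [FFP, trPP_self, sq,
    sum_sum_eq_sum_offDiag_add_sum_diag (fun i j => ω i * ω j * trPP (V i) (V j) ^ p)]

lemma sq_sum_mul_finrank_div_sub_le_sum_offDiag
    (V : Fin n → Submodule ℝ (EuclideanSpace ℝ (Fin d))) {ω : Fin n → ℝ} (hω : ∀ j, 0 ≤ ω j) :
    (∑ j, ω j * (finrank ℝ (V j) : ℝ)) ^ 2 / d - ∑ j, ω j ^ 2 * (finrank ℝ (V j) : ℝ) ≤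
      ∑ ij ∈ univ.offDiag, ω ij.1 * ω ij.2 * trPP (V ij.1) (V ij.2) := by
  have h := sq_sum_mul_finrank_le V ω
  simp only [← trPP_eq_trace, finrank_euclideanSpace_fin] at h
  rw [sum_sum_eq_sum_offDiag_add_sum_diag (fun i j => ω i * ω j * trPP (V i) (V j)),
    mul_comm] at h
  simp only [trPP_self, ← sq] at h
  have hoff : 0 ≤ ∑ ij ∈ univ.offDiag, ω ij.1 * ω ij.2 * trPP (V ij.1) (V ij.2) :=
    sum_nonneg fun ij _ => mul_nonneg (mul_nonneg (hω _) (hω _)) (trPP_nonneg _ _)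
  have hdiag : 0 ≤ ∑ j, ω j ^ 2 * (finrank ℝ (V j) : ℝ) := sum_nonneg fun j _ => by positivity
  linarith [div_le_of_le_mul₀ (Nat.cast_nonneg d) (add_nonneg hoff hdiag) h]

end FramePotential

theorem stmt0_general {d n : ℕ}
    (V : Fin n → Submodule ℝ (EuclideanSpace ℝ (Fin d)))
    (ω : Fin n → ℝ) (hω : ∀ j, 0 < ω j)
    (m : ℝ) (hm : m = ∑ j, ω j * (Module.finrank ℝ (V j) : ℝ))
    (hpos : 0 ≤ m ^ 2 / d - ∑ j, ω j ^ 2 * (Module.finrank ℝ (V j) : ℝ))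
    (p : ℕ) (hp : 1 ≤ p) :
    FFP V ω p ≥
      (m ^ 2 / d - ∑ j, ω j ^ 2 * (Module.finrank ℝ (V j) : ℝ)) ^ p /
        (∑ ij ∈ Finset.univ.offDiag (α := Fin n), ω ij.1 * ω ij.2) ^ (p - 1) +
      ∑ j, ω j ^ 2 * (Module.finrank ℝ (V j) : ℝ) ^ p := by
  obtain ⟨q, rfl⟩ := Nat.exists_eq_add_of_le' hp
  subst hm
  have hw : ∀ ij ∈ univ.offDiag, 0 ≤ ω ij.1 * ω ij.2 := fun ij _ => (mul_pos (hω _) (hω _)).le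
  have hoff := sq_sum_mul_finrank_div_sub_le_sum_offDiag V fun j => (hω j).le
  rw [FFP_eq_sum_offDiag_add, Nat.add_sub_cancel, ge_iff_le]
  gcongr ?_ + _
  calc _ ≤ (∑ ij ∈ univ.offDiag, ω ij.1 * ω ij.2 * trPP (V ij.1) (V ij.2)) ^ (q + 1) /
        (∑ ij ∈ univ.offDiag, ω ij.1 * ω ij.2) ^ q := by
        gcongr
        exact pow_nonneg (sum_nonneg hw) q
    _ ≤ _ := pow_sum_mul_div_le_sum_mul_pow _ hw (fun ij _ => trPP_nonneg _ _) q

theorem stmt0 {d n : ℕ} (hd : 1 ≤ d) (hn : 2 ≤ n)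
    (V : Fin n → Submodule ℝ (EuclideanSpace ℝ (Fin d)))
    (hVbot : ∀ j, V j ≠ ⊥) (hVtop : ∀ j, V j ≠ ⊤)
    (ω : Fin n → ℝ) (hω : ∀ j, 0 < ω j)
    (m : ℝ) (hm : m = ∑ j, ω j * (Module.finrank ℝ (V j) : ℝ))
    (hpos : 0 ≤ m ^ 2 / d - ∑ j, ω j ^ 2 * (Module.finrank ℝ (V j) : ℝ))
    (p : ℕ) (hp : 1 ≤ p) :
    FFP V ω p ≥
      (m ^ 2 / d - ∑ j, ω j ^ 2 * (Module.finrank ℝ (V j) : ℝ)) ^ p /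
        (∑ ij ∈ Finset.univ.offDiag (α := Fin n), ω ij.1 * ω ij.2) ^ (p - 1) +
      ∑ j, ω j ^ 2 * (Module.finrank ℝ (V j) : ℝ) ^ p :=
  stmt0_general V ω hω m hm hpos p hp
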